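/- arXiv:2605.14775 — 3 statements merged into one kernel-verified Lean document; each statement's English description precedes it below -/
import Mathlib

section
/- Let Δ be a numerical semigroup, d ≥ 2, and a ∈ Δ \ {0} with a+1 ∈ Δ. Then the Frobenius number of Δ_d(a) equals d·F(Δ) + d·a + d − 1, where F denotes the Frobenius number. -/
/-- A submonoid of (ℕ,+), as a set. -/
def IsSubmonoidN (M : Set ℕ) : Prop :=
  0 ∈ M ∧ ∀ a b : ℕ, a ∈ M → b ∈ M → a + b ∈ M

/-- A numerical semigroup: a submonoid of ℕ with finite complement. -/
def IsNumericalSemigroup (S : Set ℕ) : Prop :=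
  IsSubmonoidN S ∧ (Sᶜ : Set ℕ).Finite

/-- The quotient A/d = {x : d·x ∈ A}. -/
def quotSet (A : Set ℕ) (d : ℕ) : Set ℕ := {x | d * x ∈ A}

/-- The dilation d·A = {d·s : s ∈ A}. -/
def dilate (d : ℕ) (A : Set ℕ) : Set ℕ := (fun s => d * s) '' A

/-- Sumset A + B. -/
def setAdd (A B : Set ℕ) : Set ℕ := {n | ∃ a ∈ A, ∃ b ∈ B, n = a + b}

/-- Minimal system of generators: nonzero elements not a sum of two nonzero elements. -/
def msg (S : Set ℕ) : Set ℕ :=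
  {x | x ∈ S ∧ x ≠ 0 ∧ ∀ a b : ℕ, a ∈ S → b ∈ S → a ≠ 0 → b ≠ 0 → x ≠ a + b}

/-- Frobenius number: largest element of the complement. -/
noncomputable def frob (S : Set ℕ) : ℕ := sSup (Sᶜ : Set ℕ)

/-- Genus: number of gaps. -/
noncomputable def genus (S : Set ℕ) : ℕ := (Sᶜ : Set ℕ).ncard

/-- Multiplicity: least nonzero element. -/
noncomputable def multy (S : Set ℕ) : ℕ := sInf {x | x ∈ S ∧ x ≠ 0}

/-- n(S) = number of elements of S below the Frobenius number. -/
noncomputable def nnum (S : Set ℕ) : ℕ := {s | s ∈ S ∧ s < frob S}.ncard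

/-- Embedding dimension. -/
noncomputable def edim (S : Set ℕ) : ℕ := (msg S).ncard

/-- The semigroup Δ_d(a) = dΔ ∪ ⋃_{i=1}^{d-1} (da+i+dΔ). -/
def Deltada (d a : ℕ) (Δ : Set ℕ) : Set ℕ :=
  dilate d Δ ∪ ⋃ i ∈ Finset.Ico 1 d, (fun s => d * a + i + d * s) '' Δ

/-- Submonoid of ℕ generated by X, as a set. -/
def genBy (X : Set ℕ) : Set ℕ := (AddSubmonoid.closure X : Set ℕ)

/-- Multiples of x. -/
def natMultiples (x : ℕ) : Set ℕ := {n | ∃ k : ℕ, n = k * x}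

/-- Apéry set of S with respect to m. -/
def apery (S : Set ℕ) (m : ℕ) : Set ℕ := {s | s ∈ S ∧ ∀ t ∈ S, s ≠ t + m}

/-- Pseudo-Frobenius numbers, as integers. -/
def PF (S : Set ℕ) : Set ℤ :=
  {z | (∀ n : ℕ, (n : ℤ) = z → n ∉ S) ∧
    ∀ s : ℕ, s ∈ S → s ≠ 0 → ∃ m : ℕ, m ∈ S ∧ (m : ℤ) = z + s}


lemma mem_Deltada {d a : ℕ} {Δ : Set ℕ} {n : ℕ} :
    n ∈ Deltada d a Δ ↔ (∃ s ∈ Δ, n = d * s) ∨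
      ∃ i, 1 ≤ i ∧ i < d ∧ ∃ s ∈ Δ, n = d * a + i + d * s := by
  simp only [Deltada, dilate, Set.mem_union, Set.mem_image, Set.mem_iUnion,
    Finset.mem_Ico, exists_prop]
  constructor
  · rintro (⟨s, hs, rfl⟩ | ⟨i, ⟨h1, h2⟩, s, hs, rfl⟩)
    · exact Or.inl ⟨s, hs, rfl⟩
    · exact Or.inr ⟨i, h1, h2, s, hs, rfl⟩
  · rintro (⟨s, hs, rfl⟩ | ⟨i, h1, h2, s, hs, rfl⟩)
    · exact Or.inl ⟨s, hs, rfl⟩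
    · exact Or.inr ⟨i, ⟨h1, h2⟩, s, hs, rfl⟩

theorem stmt7 (Δ : Set ℕ) (hΔ : IsNumericalSemigroup Δ) (hne : Δ ≠ Set.univ)
    (d : ℕ) (hd : 2 ≤ d)
    (a : ℕ) (ha : a ∈ Δ) (ha0 : a ≠ 0) (ha1 : a + 1 ∈ Δ) :
    frob (Deltada d a Δ) = d * frob Δ + d * a + d - 1 := by
  obtain ⟨hsub, hfin⟩ := hΔ
  set F := frob Δ with hF
  have hcne : (Δᶜ : Set ℕ).Nonempty := by rwa [Set.nonempty_compl]
  have hbdd : BddAbove (Δᶜ : Set ℕ) := hfin.bddAbove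
  have hFnot : F ∉ Δ := Nat.sSup_mem hcne hbdd
  have hgt : ∀ n, F < n → n ∈ Δ := by
    intro n hn
    by_contra h
    exact absurd (le_csSup hbdd h) (not_le.mpr hn)
  have hF1 : 1 ≤ F := by
    rcases Nat.eq_zero_or_pos F with h | h
    · exact absurd (h ▸ hFnot) (not_not.mpr hsub.1)
    · exact h
  set N := d * F + d * a + d - 1 with hN
  -- N is not in Deltada
  have hNnot : N ∉ Deltada d a Δ := by
    rw [mem_Deltada]
    rintro (⟨s, hs, heq⟩ | ⟨i, h1, h2, s, hs, heq⟩)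
    · rcases le_or_gt s (F + a) with h | h
      · have h' : d * s ≤ d * (F + a) := Nat.mul_le_mul_left d h
        have : d * (F + a) = d * F + d * a := by ring
        omega
      · have h' : d * (F + a + 1) ≤ d * s := Nat.mul_le_mul_left d h
        have : d * (F + a + 1) = d * F + d * a + d := by ring
        omega
    · rcases lt_trichotomy s F with h | h | h
      · have h' : d * s ≤ d * (F - 1) := Nat.mul_le_mul_left d (by omega)
        have : d * F = d * (F - 1) + d := by
          rw [← Nat.mul_succ]; congr 1; omega
        omega
      · exact hFnot (h ▸ hs)
      · have h' : d * (F + 1) ≤ d * s := Nat.mul_le_mul_left d h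
        have : d * (F + 1) = d * F + d := by ring
        omega
  -- everything above N is in Deltada
  have hbig : ∀ n, N < n → n ∈ Deltada d a Δ := by
    intro n hn
    rw [mem_Deltada]
    have hr := Nat.mod_lt n (show 0 < d by omega)
    have hdiv := (Nat.div_add_mod n d).symm
    set q := n / d with hq
    set r := n % d with hr'
    rcases Nat.eq_zero_or_pos r with h0 | h0
    · left
      refine ⟨q, hgt q ?_, by omega⟩
      -- n = d * q > N = d*F + d*a + d - 1, so q > F
      by_contra hc
      push_neg at hc
      have : d * q ≤ d * F := Nat.mul_le_mul_left d hc
      have h2 : d * F ≤ d * F + d * a := Nat.le_add_right _ _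
      omega
    · right
      refine ⟨r, h0, hr, q - a, hgt (q - a) ?_, ?_⟩
      · -- need F < q - a, i.e. q > F + a
        by_contra hc
        push_neg at hc
        have hqa : q ≤ F + a := by omega
        have : d * q ≤ d * (F + a) := Nat.mul_le_mul_left d hqa
        have h2 : d * (F + a) = d * F + d * a := by ring
        omega
      · -- n = d*a + r + d*(q - a); need a ≤ q
        have hqa : a ≤ q := by
          by_contra hc
          push_neg at hc
          have : d * q ≤ d * a := Nat.mul_le_mul_left d (by omega)
          omega
        have : d * q = d * a + d * (q - a) := by
          rw [← Nat.mul_add]; congr 1; omega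
        omega
  -- conclude
  have hbddN : BddAbove ((Deltada d a Δ)ᶜ : Set ℕ) := by
    refine ⟨N, fun x hx => ?_⟩
    by_contra h
    exact hx (hbig x (by omega))
  apply le_antisymm
  · apply csSup_le ⟨N, hNnot⟩
    intro x hx
    by_contra h
    exact hx (hbig x (by omega))
  · exact le_csSup hbddN hNnot
end

section
/- Let Δ be a numerical semigroup with Δ ≠ ℕ, d ≥ 2, a ∈ Δ\{0} with a+1 ∈ Δ, and m = m(Δ) the multiplicity of Δ. Then the Apéry set of S = Δ_d(a) with respect to dm is the disjoint union d·Ap(Δ,m) ∪ ⋃_{i=1}^{d-1} (da+i+d·Ap(Δ,m)). -/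
lemma memDeltada (d a : ℕ) (Δ : Set ℕ) (x : ℕ) :
    x ∈ Deltada d a Δ ↔
      (∃ s ∈ Δ, d * s = x) ∨ ∃ i, (1 ≤ i ∧ i < d) ∧ ∃ s ∈ Δ, d * a + i + d * s = x := by
  simp [Deltada, dilate, Set.mem_iUnion, Finset.mem_Ico, and_assoc]

lemma mod2 (d a i s : ℕ) (h : i < d) : (d * a + i + d * s) % d = i := by
  rw [Nat.add_mul_mod_self_left, Nat.add_comm, Nat.add_mul_mod_self_left, Nat.mod_eq_of_lt h]

theorem stmt10 (Δ : Set ℕ) (hΔ : IsNumericalSemigroup Δ) (hne : Δ ≠ Set.univ)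
    (d : ℕ) (hd : 2 ≤ d)
    (a : ℕ) (ha : a ∈ Δ) (ha0 : a ≠ 0) (ha1 : a + 1 ∈ Δ)
    (m : ℕ) (hm : m = multy Δ) :
    apery (Deltada d a Δ) (d * m)
      = (fun w => d * w) '' apery Δ m ∪
        ⋃ i ∈ Finset.Ico 1 d, (fun w => d * a + i + d * w) '' apery Δ m ∧
    (∀ i ∈ Finset.Ico 1 d,
      Disjoint ((fun w => d * w) '' apery Δ m) ((fun w => d * a + i + d * w) '' apery Δ m)) ∧
    (∀ i ∈ Finset.Ico 1 d, ∀ j ∈ Finset.Ico 1 d, i ≠ j →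
      Disjoint ((fun w => d * a + i + d * w) '' apery Δ m)
        ((fun w => d * a + j + d * w) '' apery Δ m)) := by
  have hd0 : 0 < d := by omega
  refine ⟨?_, ?_, ?_⟩
  · ext x
    constructor
    · rintro ⟨hxS, hx⟩
      rcases (memDeltada d a Δ x).1 hxS with ⟨s, hs, rfl⟩ | ⟨i, ⟨hi1, hid⟩, s, hs, rfl⟩
      · left
        refine ⟨s, ⟨hs, fun u hu hsu => ?_⟩, rfl⟩
        exact hx (d * u) ((memDeltada d a Δ _).2 (Or.inl ⟨u, hu, rfl⟩))
          (by rw [hsu]; ring)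
      · right
        refine Set.mem_iUnion.2 ⟨i, Set.mem_iUnion.2
          ⟨Finset.mem_Ico.2 ⟨hi1, hid⟩, ⟨s, ⟨hs, fun u hu hsu => ?_⟩, rfl⟩⟩⟩
        exact hx (d * a + i + d * u)
          ((memDeltada d a Δ _).2 (Or.inr ⟨i, ⟨hi1, hid⟩, u, hu, rfl⟩))
          (by rw [hsu]; ring)
    · intro hx
      rcases hx with ⟨w, hw, rfl⟩ | hx
      · refine ⟨(memDeltada d a Δ _).2 (Or.inl ⟨w, hw.1, rfl⟩), fun t ht heq => ?_⟩
        simp only at heq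
        rcases (memDeltada d a Δ t).1 ht with ⟨u, hu, rfl⟩ | ⟨i, ⟨hi1, hid⟩, u, hu, rfl⟩
        · have h2 : d * w = d * (u + m) := by rw [heq]; ring
          exact hw.2 u hu (Nat.eq_of_mul_eq_mul_left hd0 h2)
        · have h2 : d * w = d * a + i + d * (u + m) := by rw [heq]; ring
          have h3 := mod2 d a i (u + m) hid
          rw [← h2, Nat.mul_mod_right] at h3
          omega
      · rw [Set.mem_iUnion] at hx
        obtain ⟨i, hx⟩ := hx
        rw [Set.mem_iUnion] at hx
        obtain ⟨hi, w, hw, rfl⟩ := hx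
        obtain ⟨hi1, hid⟩ := Finset.mem_Ico.1 hi
        refine ⟨(memDeltada d a Δ _).2 (Or.inr ⟨i, ⟨hi1, hid⟩, w, hw.1, rfl⟩),
          fun t ht heq => ?_⟩
        simp only at heq
        rcases (memDeltada d a Δ t).1 ht with ⟨u, hu, rfl⟩ | ⟨j, ⟨hj1, hjd⟩, u, hu, rfl⟩
        · have h2 : d * (u + m) = d * a + i + d * w := by rw [heq]; ring
          have h3 := mod2 d a i w hid
          rw [← h2, Nat.mul_mod_right] at h3
          omega
        · have h2 : d * a + j + d * (u + m) = d * a + i + d * w := by rw [heq]; ring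
          have h3 := mod2 d a i w hid
          rw [← h2, mod2 d a j (u + m) hjd] at h3
          subst h3
          have h4 : d * w = d * (u + m) := by omega
          exact hw.2 u hu (Nat.eq_of_mul_eq_mul_left hd0 h4)
  · intro i hi
    obtain ⟨hi1, hid⟩ := Finset.mem_Ico.1 hi
    rw [Set.disjoint_left]
    rintro x ⟨w, _, rfl⟩ ⟨w', _, h⟩
    simp only at h
    have h3 := mod2 d a i w' hid
    rw [h, Nat.mul_mod_right] at h3
    omega
  · intro i hi j hj hij
    obtain ⟨hi1, hid⟩ := Finset.mem_Ico.1 hi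
    obtain ⟨hj1, hjd⟩ := Finset.mem_Ico.1 hj
    rw [Set.disjoint_left]
    rintro x ⟨w, _, rfl⟩ ⟨w', _, h⟩
    simp only at h
    have h3 := mod2 d a j w' hjd
    rw [h, mod2 d a i w hid] at h3
    exact hij h3
end

section
/- Let Δ be a numerical semigroup, d ≥ 2, and let S be a numerical semigroup with S/d = Δ and A = msg(S) \ dΔ. Then msg(S) = A ∪ {d·n : n ∈ msg(Δ), d·n ∉ ⟨A⟩}, and consequently e(S) = e(Δ) + |A| − |{n ∈ msg(Δ) : d·n ∈ ⟨A⟩}|. -/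
/-!
Since `S` is generated by `msg S ⊆ A ∪ dΔ`, every element of `S` is `u + d·v` with `u ∈ ⟨A⟩` and
`v ∈ Δ`. For `n ∈ msg Δ`, a nontrivial splitting `d·n = a + b` in `S` therefore gives
`d·n = u + d·v`; then `d ∣ u`, say `u = d·w` with `w ∈ Δ`, and `n = w + v` forces `v = 0`
(so `d·n ∈ ⟨A⟩`) or `w = 0` (so `a, b ∈ dΔ` and `n` splits in `Δ`). Hence `d·n ∈ msg S` exactly
when `n ∈ msg Δ` and `d·n ∉ ⟨A⟩`, and the count of `e(S)` follows.
-/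

namespace IsSubmonoidN

def toAddSubmonoid {M : Set ℕ} (hM : IsSubmonoidN M) : AddSubmonoid ℕ :=
  ⟨⟨M, fun ha hb => hM.2 _ _ ha hb⟩, hM.1⟩

theorem genBy_subset {M X : Set ℕ} (hM : IsSubmonoidN M) (hX : X ⊆ M) : genBy X ⊆ M :=
  (AddSubmonoid.closure_le (S := hM.toAddSubmonoid)).mpr hX

theorem dilate {M : Set ℕ} (hM : IsSubmonoidN M) (d : ℕ) : IsSubmonoidN (dilate d M) := by
  refine ⟨⟨0, hM.1, mul_zero d⟩, ?_⟩
  rintro _ _ ⟨a, ha, rfl⟩ ⟨b, hb, rfl⟩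
  exact ⟨a + b, hM.2 a b ha hb, mul_add d a b⟩

end IsSubmonoidN

theorem genBy_mono {X Y : Set ℕ} (h : X ⊆ Y) : genBy X ⊆ genBy Y :=
  AddSubmonoid.closure_mono h

theorem mem_genBy_msg {S : Set ℕ} {x : ℕ} (hx : x ∈ S) :
    x ∈ genBy (msg S) := by
  induction x using Nat.strong_induction_on with
  | _ x ih =>
    by_cases hx0 : x = 0
    · exact hx0 ▸ (AddSubmonoid.closure (msg S)).zero_mem
    by_cases hxm : x ∈ msg S
    · exact AddSubmonoid.subset_closure hxm
    obtain ⟨a, b, ha, hb, ha0, hb0, rfl⟩ :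
        ∃ a b, a ∈ S ∧ b ∈ S ∧ a ≠ 0 ∧ b ≠ 0 ∧ x = a + b := by
      by_contra! h
      exact hxm ⟨hx, hx0, h⟩
    exact (AddSubmonoid.closure (msg S)).add_mem (ih a (by omega) ha) (ih b (by omega) hb)

theorem mem_of_mem_msg_of_mem_genBy {S X : Set ℕ} (hS : IsSubmonoidN S) (hX : X ⊆ S) {x : ℕ}
    (hx : x ∈ msg S) (hxX : x ∈ genBy X) : x ∈ X := by
  induction hxX using AddSubmonoid.closure_induction with
  | mem y hy => exact hy
  | zero => exact absurd rfl hx.2.1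
  | add a b ha hb iha ihb =>
    by_cases ha0 : a = 0
    · subst ha0; simpa using ihb (by simpa using hx)
    by_cases hb0 : b = 0
    · subst hb0; simpa using iha (by simpa using hx)
    exact absurd rfl (hx.2.2 a b (hS.genBy_subset hX ha) (hS.genBy_subset hX hb) ha0 hb0)

theorem exists_add_of_msg_subset_union {S A D : Set ℕ}
    (hD : IsSubmonoidN D) (hmsg : msg S ⊆ A ∪ D) {x : ℕ} (hx : x ∈ S) :
    ∃ u ∈ genBy A, ∃ w ∈ D, u + w = x := by
  have hx' := genBy_mono hmsg (mem_genBy_msg hx)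
  rw [genBy, AddSubmonoid.closure_union, SetLike.mem_coe, AddSubmonoid.mem_sup] at hx'
  obtain ⟨u, hu, w, hw, rfl⟩ := hx'
  exact ⟨u, hu, w, hD.genBy_subset subset_rfl hw, rfl⟩

theorem msg_finite {S : Set ℕ} (hS : IsNumericalSemigroup S) : (msg S).Finite := by
  obtain ⟨N, hN⟩ := hS.2.bddAbove
  have hmem : ∀ x, N < x → x ∈ S := fun x hx => by
    by_contra hxS
    exact absurd (hN hxS) (by omega)
  refine (Set.finite_Iic (2 * N + 2)).subset fun x hx => ?_
  rw [Set.mem_Iic]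
  by_contra! hxb
  exact hx.2.2 (x - (N + 1)) (N + 1) (hmem _ (by omega)) (hmem _ (by omega)) (by omega) (by omega)
    (by omega)

section Quotient

variable {Δ S A : Set ℕ} {d : ℕ}

theorem exists_mem_genBy_add_mul (hΔ : IsSubmonoidN Δ) (hA : A = msg S \ dilate d Δ) {x : ℕ}
    (hx : x ∈ S) : ∃ u ∈ genBy A, ∃ v ∈ Δ, u + d * v = x := by
  obtain ⟨u, hu, _, ⟨v, hv, rfl⟩, rfl⟩ :=
    exists_add_of_msg_subset_union (hΔ.dilate d) (hA ▸ Set.subset_sdiff_union _ _) hx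
  exact ⟨u, hu, v, hv, rfl⟩

theorem mem_msg_of_mul_mem_msg (hd : d ≠ 0) (hq : quotSet S d = Δ) {n : ℕ}
    (hn : d * n ∈ msg S) : n ∈ msg Δ := by
  subst hq
  refine ⟨hn.1, by rintro rfl; exact hn.2.1 (mul_zero d), fun a b ha hb ha0 hb0 hab => ?_⟩
  exact hn.2.2 (d * a) (d * b) ha hb (by positivity) (by positivity) (by rw [hab, mul_add])

theorem mul_mem_msg_of_mem_msg (hΔ : IsSubmonoidN Δ) (hd : d ≠ 0) (hS : IsSubmonoidN S)
    (hq : quotSet S d = Δ) (hA : A = msg S \ dilate d Δ) {n : ℕ} (hn : n ∈ msg Δ)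
    (hng : d * n ∉ genBy A) : d * n ∈ msg S := by
  have hΔS : ∀ v, v ∈ Δ ↔ d * v ∈ S := fun v => hq ▸ Iff.rfl
  have hAS : A ⊆ S := hA ▸ fun x hx => hx.1.1
  refine ⟨(hΔS n).1 hn.1, by simpa [hd] using hn.2.1, fun a b ha hb ha0 hb0 hab => ?_⟩
  obtain ⟨u₁, hu₁, v₁, hv₁, rfl⟩ := exists_mem_genBy_add_mul hΔ hA ha
  obtain ⟨u₂, hu₂, v₂, hv₂, rfl⟩ := exists_mem_genBy_add_mul hΔ hA hb
  have hu : u₁ + u₂ ∈ genBy A := (AddSubmonoid.closure A).add_mem hu₁ hu₂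
  have hv : v₁ + v₂ ∈ Δ := hΔ.2 _ _ hv₁ hv₂
  have hsum : d * n = (u₁ + u₂) + d * (v₁ + v₂) := by rw [hab]; ring
  by_cases hu0 : u₁ + u₂ = 0
  · obtain ⟨rfl, rfl⟩ : u₁ = 0 ∧ u₂ = 0 := by omega
    refine hn.2.2 v₁ v₂ hv₁ hv₂ (by rintro rfl; simp at ha0) (by rintro rfl; simp at hb0) ?_
    exact Nat.eq_of_mul_eq_mul_left (Nat.pos_of_ne_zero hd) (by rw [hab]; ring)
  obtain ⟨w, hw⟩ : d ∣ u₁ + u₂ :=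
    (Nat.dvd_add_left (dvd_mul_right d _)).mp (hsum ▸ dvd_mul_right d n)
  have hwΔ : w ∈ Δ := (hΔS w).2 (hw ▸ hS.genBy_subset hAS hu)
  have hnw : n = w + (v₁ + v₂) :=
    Nat.eq_of_mul_eq_mul_left (Nat.pos_of_ne_zero hd) (by rw [hsum, hw]; ring)
  by_cases hv0 : v₁ + v₂ = 0
  · exact hng (by rw [hsum, hv0, mul_zero, add_zero]; exact hu)
  exact hn.2.2 w (v₁ + v₂) hwΔ hv (by rintro rfl; simp_all) hv0 hnw

theorem mul_mem_msg_iff (hΔ : IsSubmonoidN Δ) (hd : d ≠ 0) (hS : IsSubmonoidN S)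
    (hq : quotSet S d = Δ) (hA : A = msg S \ dilate d Δ) (n : ℕ) :
    d * n ∈ msg S ↔ n ∈ msg Δ ∧ d * n ∉ genBy A := by
  refine ⟨fun hn => ⟨mem_msg_of_mul_mem_msg hd hq hn, fun hgen => ?_⟩,
    fun ⟨hn, hng⟩ => mul_mem_msg_of_mem_msg hΔ hd hS hq hA hn hng⟩
  have hnA : d * n ∈ A := mem_of_mem_msg_of_mem_genBy hS (hA ▸ fun x hx => hx.1.1) hn hgen
  rw [hA] at hnA
  exact hnA.2 ⟨n, (mem_msg_of_mul_mem_msg hd hq hn).1, rfl⟩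

theorem msg_eq_union (hΔ : IsSubmonoidN Δ) (hd : d ≠ 0) (hS : IsSubmonoidN S)
    (hq : quotSet S d = Δ) (hA : A = msg S \ dilate d Δ) :
    msg S = A ∪ (d * ·) '' (msg Δ \ {n | d * n ∈ genBy A}) := by
  ext x
  by_cases hx : x ∈ dilate d Δ
  · obtain ⟨n, hn, rfl⟩ := hx
    have hnA : d * n ∉ A := hA ▸ fun h => h.2 ⟨n, hn, rfl⟩
    rw [Set.mem_union, (mul_right_injective₀ hd).mem_set_image, mul_mem_msg_iff hΔ hd hS hq hA]
    simp [hnA]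
  · have hxA : x ∈ msg S ↔ x ∈ A := hA ▸ ⟨fun h => ⟨h, hx⟩, fun h => h.1⟩
    have hxd : x ∉ (d * ·) '' (msg Δ \ {n | d * n ∈ genBy A}) := by
      rintro ⟨n, hn, rfl⟩
      exact hx ⟨n, hn.1.1, rfl⟩
    simp [hxA, hxd]

end Quotient

theorem stmt14 (Δ : Set ℕ) (hΔ : IsNumericalSemigroup Δ) (d : ℕ) (hd : 2 ≤ d)
    (S : Set ℕ) (hS : IsNumericalSemigroup S) (hq : quotSet S d = Δ)
    (A : Set ℕ) (hA : A = msg S \ dilate d Δ) :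
    msg S = A ∪ {y | ∃ n ∈ msg Δ, y = d * n ∧ d * n ∉ genBy A} ∧
    edim S = edim Δ + A.ncard - {n | n ∈ msg Δ ∧ d * n ∈ genBy A}.ncard := by
  have hd0 : d ≠ 0 := by omega
  have hmsg := msg_eq_union hΔ.1 hd0 hS.1 hq hA
  have himage : {y | ∃ n ∈ msg Δ, y = d * n ∧ d * n ∉ genBy A} =
      (d * ·) '' (msg Δ \ {n | d * n ∈ genBy A}) := by
    ext y
    constructor
    · rintro ⟨n, hn, rfl, hng⟩
      exact ⟨n, ⟨hn, hng⟩, rfl⟩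
    · rintro ⟨n, ⟨hn, hng⟩, rfl⟩
      exact ⟨n, hn, rfl, hng⟩
  refine ⟨himage ▸ hmsg, ?_⟩
  have hdisj : Disjoint A ((d * ·) '' (msg Δ \ {n | d * n ∈ genBy A})) :=
    Set.disjoint_left.mpr fun x hxA ⟨n, hn, hx⟩ => (hA ▸ hxA).2 ⟨n, hn.1.1, hx⟩
  have hAfin : A.Finite := (msg_finite hS).subset (hA ▸ Set.sdiff_subset)
  have hsplit : {n | n ∈ msg Δ ∧ d * n ∈ genBy A}.ncard +
      (msg Δ \ {n | d * n ∈ genBy A}).ncard = (msg Δ).ncard :=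
    Set.ncard_inter_add_ncard_sdiff_eq_ncard _ _ (msg_finite hΔ)
  rw [edim, edim, hmsg, Set.ncard_union_eq hdisj hAfin ((msg_finite hΔ).sdiff.image _),
    Set.ncard_image_of_injective _ (mul_right_injective₀ hd0)]
  omega
end
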